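/- arXiv:2204.04667 — 7 statements merged into one kernel-verified Lean document; each statement's English description precedes it below -/
import Mathlib

section
/- For every dimension D ≥ 1 and all vectors x, y ∈ ℝ^D, the Gaussian expectation of the product of positive random features recovers the exponential kernel: ∫_{ℝ^D} (2π)^{−D/2} exp(−‖ω‖²/2) · exp(⟨ω, x⟩ − ‖x‖²/2) · exp(⟨ω, y⟩ − ‖y‖²/2) dω = exp(⟨x, y⟩), i.e. E_{ω∼N(0,I)}[ξ(x,ω)ξ(y,ω)] = exp(⟨x,y⟩). -/
open MeasureTheory Real
open scoped RealInnerProductSpace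

noncomputable section

/-- `E D` is Euclidean space `ℝ^D`. -/
abbrev E (D : ℕ) := EuclideanSpace ℝ (Fin D)

/-- Gaussian density `N(ω; μ, I) = (2π)^{-D/2} exp(-‖ω - μ‖²/2)`. -/
def gaussN (D : ℕ) (μ ω : E D) : ℝ :=
  (2 * Real.pi) ^ (-(D : ℝ) / 2) * Real.exp (-‖ω - μ‖ ^ 2 / 2)

/-- Positive randomized mapping `ξ(x, ω) = exp(⟨ω, x⟩ - ‖x‖²/2)`. -/
def xi (D : ℕ) (x ω : E D) : ℝ :=
  Real.exp (⟪ω, x⟫ - ‖x‖ ^ 2 / 2)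

/-- The Gaussian expectation of the product of positive random features recovers the
exponential kernel: `E_{ω∼N(0,I)}[ξ(x,ω)ξ(y,ω)] = exp(⟨x,y⟩)`. -/
theorem positive_random_features_unbiased (D : ℕ) (hD : 1 ≤ D) (x y : E D) :
    ∫ ω, gaussN D 0 ω * xi D x ω * xi D y ω = Real.exp ⟪x, y⟫ := by
  have key : ∀ ω : E D, gaussN D 0 ω * xi D x ω * xi D y ω =
      Real.exp ⟪x, y⟫ * ((2 * Real.pi) ^ (-(D : ℝ) / 2) *
        Real.exp (-(1/2 : ℝ) * ‖ω - (x + y)‖ ^ 2)) := by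
    intro ω
    simp only [gaussN, xi, sub_zero]
    rw [mul_assoc, mul_assoc, ← Real.exp_add, ← Real.exp_add, mul_comm (Real.exp ⟪x, y⟫),
      mul_assoc, ← Real.exp_add]
    congr 1
    have h1 : ‖ω - (x + y)‖ ^ 2 = ‖ω‖ ^ 2 - 2 * ⟪ω, x + y⟫ + ‖x + y‖ ^ 2 :=
      norm_sub_sq_real ω (x + y)
    have h2 : ‖x + y‖ ^ 2 = ‖x‖ ^ 2 + 2 * ⟪x, y⟫ + ‖y‖ ^ 2 := norm_add_sq_real x y
    have h3 : ⟪ω, x + y⟫ = ⟪ω, x⟫ + ⟪ω, y⟫ := inner_add_right ω x y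
    rw [h1, h2, h3]
    ring
  calc ∫ ω, gaussN D 0 ω * xi D x ω * xi D y ω
      = ∫ ω : E D, Real.exp ⟪x, y⟫ * ((2 * Real.pi) ^ (-(D : ℝ) / 2) *
          Real.exp (-(1/2 : ℝ) * ‖ω - (x + y)‖ ^ 2)) := by
        exact integral_congr_ae (Filter.Eventually.of_forall key)
    _ = Real.exp ⟪x, y⟫ * ((2 * Real.pi) ^ (-(D : ℝ) / 2) *
          ∫ ω : E D, Real.exp (-(1/2 : ℝ) * ‖ω - (x + y)‖ ^ 2)) := by
        rw [integral_const_mul, integral_const_mul]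
    _ = Real.exp ⟪x, y⟫ * ((2 * Real.pi) ^ (-(D : ℝ) / 2) *
          ∫ ω : E D, Real.exp (-(1/2 : ℝ) * ‖ω‖ ^ 2)) := by
        rw [integral_sub_right_eq_self (fun ω : E D => Real.exp (-(1/2 : ℝ) * ‖ω‖ ^ 2)) (x + y)]
    _ = Real.exp ⟪x, y⟫ := by
        rw [GaussianFourier.integral_rexp_neg_mul_sq_norm (by norm_num : (0:ℝ) < 1/2)]
        have : (Real.pi / (1/2 : ℝ)) = 2 * Real.pi := by ring
        rw [this]
        have hfr : (Module.finrank ℝ (E D) : ℝ) = (D : ℝ) := by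
          simp [finrank_euclideanSpace]
        rw [hfr, ← Real.rpow_add (by positivity), neg_div, neg_add_cancel, Real.rpow_zero,
          mul_one]
end
end

section
/- (Proposition 1, density part.) For every dimension D ≥ 1, every query q ∈ ℝ^D and keys k_1, …, k_M ∈ ℝ^D, the following pointwise identity holds for all ω ∈ ℝ^D: N(ω; 0, I) · (Σ_{m=1}^M ξ(q, ω) ξ(k_m, ω)) / (Σ_{m'=1}^M exp(⟨q, k_{m'}⟩)) = Σ_{m=1}^M π_m · N(ω; q + k_m, I), where π_m = exp(⟨q, k_m⟩)/Σ_{m'=1}^M exp(⟨q, k_{m'}⟩). In particular, this function of ω is the density of a Gaussian mixture with component weights π_m and means q + k_m. -/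
open MeasureTheory Real
open scoped RealInnerProductSpace

noncomputable section

lemma ra_key (D : ℕ) (q x ω : E D) :
    gaussN D 0 ω * (xi D q ω * xi D x ω) = Real.exp ⟪q, x⟫ * gaussN D (q + x) ω := by
  unfold gaussN xi
  rw [sub_zero]
  have h1 : ‖ω - (q + x)‖ ^ 2 = ‖ω‖ ^ 2 - 2 * ⟪ω, q + x⟫ + ‖q + x‖ ^ 2 :=
    norm_sub_sq_real ω (q + x)
  have h2 : ‖q + x‖ ^ 2 = ‖q‖ ^ 2 + 2 * ⟪q, x⟫ + ‖x‖ ^ 2 := norm_add_sq_real q x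
  have key : Real.exp (-‖ω‖ ^ 2 / 2) * (Real.exp (⟪ω, q⟫ - ‖q‖ ^ 2 / 2) *
      Real.exp (⟪ω, x⟫ - ‖x‖ ^ 2 / 2)) =
      Real.exp ⟪q, x⟫ * Real.exp (-‖ω - (q + x)‖ ^ 2 / 2) := by
    rw [← Real.exp_add, ← Real.exp_add, ← Real.exp_add]
    congr 1
    rw [h1, h2, inner_add_right]
    ring
  linear_combination ((2 * Real.pi) ^ (-(D : ℝ) / 2)) * key

/-- Proposition 1 (density part): the normalized RA density is a Gaussian mixture with
softmax component weights `π_m` and means `q + k_m`. -/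
theorem ra_density_is_gaussian_mixture (D M : ℕ) (hD : 1 ≤ D)
    (q : E D) (k : Fin M → E D) (ω : E D) :
    gaussN D 0 ω * (∑ m, xi D q ω * xi D (k m) ω) / (∑ m', Real.exp ⟪q, k m'⟫) =
      ∑ m, (Real.exp ⟪q, k m⟫ / ∑ m', Real.exp ⟪q, k m'⟫) * gaussN D (q + k m) ω := by
  rw [Finset.mul_sum, Finset.sum_div]
  refine Finset.sum_congr rfl fun m _ => ?_
  rw [ra_key, mul_div_right_comm]
end
end

section
/- (Proposition 2: softmax attention as an expectation.) For every dimension D ≥ 1, every query q ∈ ℝ^D, keys k_1, …, k_M ∈ ℝ^D and values v_1, …, v_M ∈ ℝ^D, the vector-valued function ω ↦ p(ω) f(ω) is Lebesgue integrable on ℝ^D and ∫_{ℝ^D} p(ω) f(ω) dω = Σ_{m=1}^M π_m v_m, i.e. the expectation of the randomized-attention integrand f under the mixture density p equals the softmax attention output SoftmaxAttn(q, K, V). -/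
open MeasureTheory Real
open scoped RealInnerProductSpace

noncomputable section

/-- The RA Gaussian-mixture density `p(ω) = Σ_m π_m N(ω; q + k_m, I)` with softmax
weights `π_m = exp(⟨q, k_m⟩)/Σ_{m'} exp(⟨q, k_{m'}⟩)`. -/
def raDensity (D M : ℕ) (q : E D) (k : Fin M → E D) (ω : E D) : ℝ :=
  ∑ m, (Real.exp ⟪q, k m⟫ / ∑ m', Real.exp ⟪q, k m'⟫) * gaussN D (q + k m) ω

/-- The randomized-attention integrand
`f(ω) = (Σ_m ξ(q,ω) ξ(k_m,ω) v_m) / (Σ_{m'} ξ(q,ω) ξ(k_{m'},ω))`. -/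
def raIntegrand (D M : ℕ) (q : E D) (k v : Fin M → E D) (ω : E D) : E D :=
  (∑ m', xi D q ω * xi D (k m') ω)⁻¹ • ∑ m, (xi D q ω * xi D (k m) ω) • v m

/-!
Completing the square gives `N(ω; q + k, I) = N(ω; 0, I) e^{-⟨q, k⟩} ξ(q, ω) ξ(k, ω)`, so
`π_m N(ω; q + k_m, I) = c(ω) ξ(q, ω) ξ(k_m, ω)` with `c(ω) = N(ω; 0, I) / Σ_{m'} e^{⟨q, k_{m'}⟩}`
independent of `m`. Hence `p(ω) = c(ω) Σ_m ξ(q, ω) ξ(k_m, ω)`, the normalisation of `f` cancels,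
and `p f = Σ_m π_m N(· ; q + k_m, I) v_m`, whose integral is `Σ_m π_m v_m`.
-/

section GaussianIntegral

variable {V : Type*} [NormedAddCommGroup V] [InnerProductSpace ℝ V] [FiniteDimensional ℝ V]
  [MeasurableSpace V] [BorelSpace V]

theorem integral_exp_neg_sq_norm_div_two :
    ∫ v : V, exp (-‖v‖ ^ 2 / 2) = (2 * π) ^ (Module.finrank ℝ V / 2 : ℝ) := by
  have h := GaussianFourier.integral_rexp_neg_mul_sq_norm (V := V) (b := 1 / 2) (by norm_num)
  rw [show π / (1 / 2) = 2 * π by ring] at h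
  simpa only [neg_mul, one_div, inv_mul_eq_div, neg_div] using h

theorem integrable_exp_neg_sq_norm_div_two : Integrable fun v : V ↦ exp (-‖v‖ ^ 2 / 2) :=
  Integrable.of_integral_ne_zero <| by rw [integral_exp_neg_sq_norm_div_two]; positivity

end GaussianIntegral

theorem integrable_gaussN (D : ℕ) (μ : E D) : Integrable (gaussN D μ) :=
  (integrable_exp_neg_sq_norm_div_two.comp_sub_right μ).const_mul _

theorem integral_gaussN (D : ℕ) (μ : E D) : ∫ ω, gaussN D μ ω = 1 := by
  simp only [gaussN, integral_const_mul,
    integral_sub_right_eq_self (fun ω : E D ↦ exp (-‖ω‖ ^ 2 / 2)) μ,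
    integral_exp_neg_sq_norm_div_two, finrank_euclideanSpace_fin]
  rw [← rpow_add (by positivity), neg_div, neg_add_cancel, rpow_zero]

theorem gaussN_add (D : ℕ) (x y ω : E D) :
    gaussN D (x + y) ω = gaussN D 0 ω * exp (-⟪x, y⟫) * (xi D x ω * xi D y ω) := by
  have h_sq : ‖ω - (x + y)‖ ^ 2 =
      ‖ω‖ ^ 2 - 2 * (⟪ω, x⟫ + ⟪ω, y⟫) + (‖x‖ ^ 2 + 2 * ⟪x, y⟫ + ‖y‖ ^ 2) := by
    rw [norm_sub_sq_real, inner_add_right, norm_add_sq_real]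
  simp only [gaussN, xi, sub_zero, mul_assoc, ← exp_add, h_sq]
  ring_nf

theorem softmax_mul_gaussN (D M : ℕ) (q : E D) (k : Fin M → E D) (m : Fin M) (ω : E D) :
    (exp ⟪q, k m⟫ / ∑ m', exp ⟪q, k m'⟫) * gaussN D (q + k m) ω =
      gaussN D 0 ω / (∑ m', exp ⟪q, k m'⟫) * (xi D q ω * xi D (k m) ω) := by
  rw [gaussN_add, exp_neg]
  field_simp

theorem raDensity_eq (D M : ℕ) (q : E D) (k : Fin M → E D) (ω : E D) :
    raDensity D M q k ω =
      gaussN D 0 ω / (∑ m', exp ⟪q, k m'⟫) * ∑ m, xi D q ω * xi D (k m) ω := by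
  simp only [raDensity, softmax_mul_gaussN, Finset.mul_sum]

theorem raDensity_smul_raIntegrand (D M : ℕ) (q : E D) (k v : Fin M → E D) (ω : E D) :
    raDensity D M q k ω • raIntegrand D M q k v ω =
      ∑ m, ((exp ⟪q, k m⟫ / ∑ m', exp ⟪q, k m'⟫) * gaussN D (q + k m) ω) • v m := by
  rcases isEmpty_or_nonempty (Fin M) with hM | hM
  · simp [raDensity]
  have h_norm : ∑ m, xi D q ω * xi D (k m) ω ≠ 0 :=
    (Finset.sum_pos (fun m _ ↦ mul_pos (exp_pos _) (exp_pos _)) Finset.univ_nonempty).ne'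
  rw [raIntegrand, raDensity_eq, mul_smul, smul_inv_smul₀ h_norm, Finset.smul_sum]
  simp only [smul_smul, softmax_mul_gaussN]

theorem softmax_attention_as_expectation_general (D M : ℕ)
    (q : E D) (k v : Fin M → E D) :
    Integrable (fun ω => raDensity D M q k ω • raIntegrand D M q k v ω) ∧
    ∫ ω, raDensity D M q k ω • raIntegrand D M q k v ω =
      ∑ m, (Real.exp ⟪q, k m⟫ / ∑ m', Real.exp ⟪q, k m'⟫) • v m := by
  have h_term (m : Fin M) : Integrable fun ω ↦
      ((exp ⟪q, k m⟫ / ∑ m', exp ⟪q, k m'⟫) * gaussN D (q + k m) ω) • v m :=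
    ((integrable_gaussN D _).const_mul _).smul_const _
  simp only [raDensity_smul_raIntegrand]
  refine ⟨integrable_finsetSum _ fun m _ ↦ h_term m, ?_⟩
  rw [integral_finsetSum _ fun m _ ↦ h_term m]
  simp only [integral_smul_const, integral_const_mul, integral_gaussN, mul_one]

/-- Proposition 2: softmax attention as an expectation. `ω ↦ p(ω) f(ω)` is Lebesgue
integrable and `∫ p(ω) f(ω) dω = Σ_m π_m v_m = SoftmaxAttn(q, K, V)`. -/
theorem softmax_attention_as_expectation (D M : ℕ) (hD : 1 ≤ D)
    (q : E D) (k v : Fin M → E D) :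
    Integrable (fun ω => raDensity D M q k ω • raIntegrand D M q k v ω) ∧
    ∫ ω, raDensity D M q k ω • raIntegrand D M q k v ω =
      ∑ m, (Real.exp ⟪q, k m⟫ / ∑ m', Real.exp ⟪q, k m'⟫) • v m :=
  softmax_attention_as_expectation_general D M q k v
end
end

section
/- (Hyperbolic feature component identity.) For every dimension D ≥ 1 and all vectors x, y, ω ∈ ℝ^D, the pointwise identity N(ω; 0, I) · ξ_h(x, ω)ᵀ ξ_h(y, ω) / exp(⟨x, y⟩) = (1/2) N(ω; x + y, I) + (1/2) N(ω; −x − y, I) holds, where ξ_h(x, ω)ᵀ ξ_h(y, ω) = (1/2) exp(−‖x‖²/2 − ‖y‖²/2) (exp(⟨ω, x + y⟩) + exp(−⟨ω, x + y⟩)). -/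
open MeasureTheory Real
open scoped RealInnerProductSpace

noncomputable section

/-- The hyperbolic randomized mapping
`ξ_h(x, ω) = 2^{-1/2} exp(-‖x‖²/2) (exp(⟨ω, x⟩), exp(-⟨ω, x⟩)) ∈ ℝ²`. -/
def xiH (D : ℕ) (x ω : E D) : ℝ × ℝ :=
  ((2 : ℝ) ^ (-(1 : ℝ) / 2) * Real.exp (-‖x‖ ^ 2 / 2)) •
    (Real.exp ⟪ω, x⟫, Real.exp (-⟪ω, x⟫))

/-- Dot product in `ℝ²`. -/
def dot2 (a b : ℝ × ℝ) : ℝ := a.1 * b.1 + a.2 * b.2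

/-- Hyperbolic feature component identity: pointwise,
`N(ω; 0, I) ξ_h(x, ω)ᵀ ξ_h(y, ω) / exp(⟨x, y⟩)
  = (1/2) N(ω; x + y, I) + (1/2) N(ω; -x - y, I)`. -/
theorem hyperbolic_component_identity (D : ℕ) (hD : 1 ≤ D) (x y ω : E D) :
    gaussN D 0 ω * dot2 (xiH D x ω) (xiH D y ω) / Real.exp ⟪x, y⟫ =
      (1 / 2) * gaussN D (x + y) ω + (1 / 2) * gaussN D (-x - y) ω := by
  have h2 : (2:ℝ) ^ (-(1:ℝ)/2) * (2:ℝ) ^ (-(1:ℝ)/2) = 1/2 := by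
    rw [← Real.rpow_add two_pos]
    norm_num
  have hdot : dot2 (xiH D x ω) (xiH D y ω) =
      1/2 * (Real.exp (-‖x‖^2/2) * Real.exp (-‖y‖^2/2)) *
        (Real.exp ⟪ω, x⟫ * Real.exp ⟪ω, y⟫ +
          Real.exp (-⟪ω, x⟫) * Real.exp (-⟪ω, y⟫)) := by
    simp only [dot2, xiH, Prod.smul_mk, smul_eq_mul]
    rw [← h2]
    ring
  have key : ∀ μ : E D, Real.exp (-‖ω - μ‖ ^ 2 / 2) =
      Real.exp (-‖ω‖^2/2) * Real.exp ⟪ω, μ⟫ * Real.exp (-‖μ‖^2/2) := by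
    intro μ
    rw [← Real.exp_add, ← Real.exp_add]
    congr 1
    rw [norm_sub_sq_real, real_inner_comm]
    ring
  have hxy : -x - y = -(x + y) := by abel
  have hsum : Real.exp (-‖x + y‖^2/2) =
      Real.exp (-‖x‖^2/2) * Real.exp (-‖y‖^2/2) * Real.exp (-⟪x, y⟫) := by
    rw [← Real.exp_add, ← Real.exp_add]
    congr 1
    rw [norm_add_sq_real]
    ring
  have hin : ⟪ω, x + y⟫ = ⟪ω, x⟫ + ⟪ω, y⟫ := inner_add_right ω x y
  have hin2 : ⟪ω, -(x + y)⟫ = -(⟪ω, x⟫ + ⟪ω, y⟫) := by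
    rw [inner_neg_right, hin]
  simp only [gaussN, hdot, sub_zero, key, hxy, norm_neg, hsum, hin, hin2]
  rw [div_eq_iff (Real.exp_ne_zero _)]
  rw [Real.exp_add ⟪ω, x⟫ ⟪ω, y⟫, neg_add, Real.exp_add (-⟪ω, x⟫) (-⟪ω, y⟫),
    Real.exp_neg ⟪ω, x⟫, Real.exp_neg ⟪ω, y⟫, Real.exp_neg ⟪x, y⟫]
  have e1 := Real.exp_ne_zero ⟪ω, x⟫
  have e2 := Real.exp_ne_zero ⟪ω, y⟫
  have e3 := Real.exp_ne_zero ⟪x, y⟫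
  field_simp
end
end

section
/- (Corollary 1: the RA density for the hyperbolic mapping.) For every dimension D ≥ 1, every query q ∈ ℝ^D and keys k_1, …, k_M ∈ ℝ^D, the following pointwise identity holds for all ω ∈ ℝ^D: N(ω; 0, I) · (Σ_{m=1}^M ξ_h(q, ω)ᵀ ξ_h(k_m, ω)) / (Σ_{m'=1}^M exp(⟨q, k_{m'}⟩)) = (1/2) Σ_{m=1}^M π_m (N(ω; q + k_m, I) + N(ω; −q − k_m, I)), where π_m = exp(⟨q, k_m⟩)/Σ_{m'=1}^M exp(⟨q, k_{m'}⟩). -/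
open MeasureTheory Real
open scoped RealInnerProductSpace

noncomputable section

theorem key (D : ℕ) (q k ω : E D) :
    gaussN D 0 ω * dot2 (xiH D q ω) (xiH D k ω)
      = 1/2 * Real.exp ⟪q, k⟫ * (gaussN D (q + k) ω + gaussN D (-q - k) ω) := by
  have hc : (2:ℝ)^(-(1:ℝ)/2) * (2:ℝ)^(-(1:ℝ)/2) = 1/2 := by
    rw [← Real.rpow_add two_pos]
    norm_num
  have L : dot2 (xiH D q ω) (xiH D k ω) =
      (1/2) * Real.exp (-‖q‖^2/2) * Real.exp (-‖k‖^2/2) *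
        (Real.exp ⟪ω,q⟫ * Real.exp ⟪ω,k⟫ + Real.exp (-⟪ω,q⟫) * Real.exp (-⟪ω,k⟫)) := by
    simp only [xiH, dot2, Prod.smul_fst, Prod.smul_snd, smul_eq_mul]
    linear_combination (Real.exp (-‖q‖^2/2) * Real.exp (-‖k‖^2/2) *
      (Real.exp ⟪ω,q⟫ * Real.exp ⟪ω,k⟫ + Real.exp (-⟪ω,q⟫) * Real.exp (-⟪ω,k⟫))) * hc
  have e1 : ‖ω - (q+k)‖^2 = ‖ω‖^2 - 2*(⟪ω,q⟫+⟪ω,k⟫) + (‖q‖^2 + 2*⟪q,k⟫ + ‖k‖^2) := by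
    rw [norm_sub_sq_real, norm_add_sq_real, inner_add_right]
  have e2 : ‖ω - (-q-k)‖^2 = ‖ω‖^2 + 2*(⟪ω,q⟫+⟪ω,k⟫) + (‖q‖^2 + 2*⟪q,k⟫ + ‖k‖^2) := by
    have h : ω - (-q-k) = ω + (q+k) := by abel
    rw [h, norm_add_sq_real, norm_add_sq_real, inner_add_right]
  have hX : Real.exp (-‖ω - (q+k)‖^2/2) =
      Real.exp (-‖ω‖^2/2) * Real.exp (-‖q‖^2/2) * Real.exp (-‖k‖^2/2) *
        Real.exp ⟪ω,q⟫ * Real.exp ⟪ω,k⟫ / Real.exp ⟪q,k⟫ := by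
    rw [show -‖ω - (q+k)‖^2/2 = (-‖ω‖^2/2 + -‖q‖^2/2 + -‖k‖^2/2 + ⟪ω,q⟫ + ⟪ω,k⟫) - ⟪q,k⟫ by
      rw [e1]; ring]
    rw [Real.exp_sub, Real.exp_add, Real.exp_add, Real.exp_add, Real.exp_add]
  have hY : Real.exp (-‖ω - (-q-k)‖^2/2) =
      Real.exp (-‖ω‖^2/2) * Real.exp (-‖q‖^2/2) * Real.exp (-‖k‖^2/2) *
        Real.exp (-⟪ω,q⟫) * Real.exp (-⟪ω,k⟫) / Real.exp ⟪q,k⟫ := by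
    rw [show -‖ω - (-q-k)‖^2/2 = (-‖ω‖^2/2 + -‖q‖^2/2 + -‖k‖^2/2 + -⟪ω,q⟫ + -⟪ω,k⟫) - ⟪q,k⟫ by
      rw [e2]; ring]
    rw [Real.exp_sub, Real.exp_add, Real.exp_add, Real.exp_add, Real.exp_add]
  simp only [gaussN, sub_zero]
  rw [L, hX, hY]
  field_simp


/-- Corollary 1: the RA density for the hyperbolic mapping is the symmetrized
Gaussian mixture `(1/2) Σ_m π_m (N(ω; q + k_m, I) + N(ω; -q - k_m, I))`. -/
theorem hyperbolic_ra_density (D M : ℕ) (hD : 1 ≤ D)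
    (q : E D) (k : Fin M → E D) (ω : E D) :
    gaussN D 0 ω * (∑ m, dot2 (xiH D q ω) (xiH D (k m) ω)) /
        (∑ m', Real.exp ⟪q, k m'⟫) =
      (1 / 2) * ∑ m, (Real.exp ⟪q, k m⟫ / ∑ m', Real.exp ⟪q, k m'⟫) *
        (gaussN D (q + k m) ω + gaussN D (-q - k m) ω) := by
  rw [Finset.mul_sum, Finset.sum_div, Finset.mul_sum]
  refine Finset.sum_congr rfl fun m _ => ?_
  rw [key]
  ring
end
end

section
/- (Hyperbolic features are unbiased for the exponential kernel.) For every dimension D ≥ 1 and all vectors x, y ∈ ℝ^D, the function ω ↦ N(ω; 0, I) · ξ_h(x, ω)ᵀ ξ_h(y, ω) is Lebesgue integrable on ℝ^D and ∫_{ℝ^D} N(ω; 0, I) ξ_h(x, ω)ᵀ ξ_h(y, ω) dω = exp(⟨x, y⟩). -/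
open MeasureTheory Real
open scoped RealInnerProductSpace

noncomputable section

lemma gauss_mgf (D : ℕ) (v : E D) :
    Integrable (fun ω : E D => gaussN D 0 ω * Real.exp ⟪ω, v⟫) ∧
    ∫ ω : E D, gaussN D 0 ω * Real.exp ⟪ω, v⟫ = Real.exp (‖v‖ ^ 2 / 2) := by
  have hb : (0 : ℝ) < ((1/2 : ℂ)).re := by norm_num
  have heqC : ∀ ω : E D, (-(1/2 : ℂ) * (‖ω‖ : ℂ) ^ 2 + 1 * (⟪v, ω⟫ : ℂ)) =
      ((-(1/2) * ‖ω‖ ^ 2 + ⟪v, ω⟫ : ℝ) : ℂ) := by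
    intro ω; push_cast; ring
  have heq : ∀ ω : E D, Real.exp (-(1/2) * ‖ω‖ ^ 2 + ⟪v, ω⟫) =
      (Complex.exp (-(1/2 : ℂ) * (‖ω‖ : ℂ) ^ 2 + 1 * (⟪v, ω⟫ : ℂ))).re := by
    intro ω
    rw [heqC ω, ← Complex.ofReal_exp, Complex.ofReal_re]
  have hint := (GaussianFourier.integrable_cexp_neg_mul_sq_norm_add (V := E D) hb 1 v).re
  have hIexp : Integrable (fun ω : E D => Real.exp (-(1/2) * ‖ω‖ ^ 2 + ⟪v, ω⟫)) := by
    refine hint.congr (Filter.Eventually.of_forall fun ω => ?_)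
    exact (heq ω).symm
  have hptwise : ∀ ω : E D, gaussN D 0 ω * Real.exp ⟪ω, v⟫ =
      (2 * Real.pi) ^ (-(D : ℝ) / 2) * Real.exp (-(1/2) * ‖ω‖ ^ 2 + ⟪v, ω⟫) := by
    intro ω
    simp only [gaussN, sub_zero, mul_assoc, ← Real.exp_add]
    rw [real_inner_comm ω v]
    ring_nf
  have hI : Integrable (fun ω : E D => gaussN D 0 ω * Real.exp ⟪ω, v⟫) := by
    refine (hIexp.const_mul ((2 * Real.pi) ^ (-(D : ℝ) / 2))).congr
      (Filter.Eventually.of_forall fun ω => ?_)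
    exact (hptwise ω).symm
  refine ⟨hI, ?_⟩
  -- compute the complex integral
  have hC := GaussianFourier.integral_cexp_neg_mul_sq_norm_add (V := E D) hb 1 v
  have hrank : (Module.finrank ℝ (E D) : ℂ) = (D : ℂ) := by
    norm_cast
    simp [finrank_euclideanSpace]
  have hLHS : (∫ ω : E D, Complex.exp (-(1/2 : ℂ) * (‖ω‖ : ℂ) ^ 2 + 1 * (⟪v, ω⟫ : ℂ)))
      = ((∫ ω : E D, Real.exp (-(1/2) * ‖ω‖ ^ 2 + ⟪v, ω⟫) : ℝ) : ℂ) := by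
    have hfun : (fun ω : E D => Complex.exp (-(1/2 : ℂ) * (‖ω‖ : ℂ) ^ 2 + 1 * (⟪v, ω⟫ : ℂ)))
        = fun ω : E D => ((Real.exp (-(1/2) * ‖ω‖ ^ 2 + ⟪v, ω⟫) : ℝ) : ℂ) :=
      funext fun ω => by rw [heqC ω, ← Complex.ofReal_exp]
    rw [hfun]; exact integral_ofReal
  have hRHS : ((Real.pi : ℂ) / (1/2 : ℂ)) ^ ((Module.finrank ℝ (E D) : ℂ) / 2) *
      Complex.exp ((1 : ℂ) ^ 2 * (‖v‖ : ℂ) ^ 2 / (4 * (1/2 : ℂ)))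
      = (((2 * Real.pi) ^ ((D : ℝ) / 2) * Real.exp (‖v‖ ^ 2 / 2) : ℝ) : ℂ) := by
    rw [hrank]
    have h1 : ((Real.pi : ℂ) / (1/2 : ℂ)) = ((2 * Real.pi : ℝ) : ℂ) := by
      push_cast; ring
    have h2 : ((D : ℂ) / 2) = (((D : ℝ) / 2 : ℝ) : ℂ) := by push_cast; ring
    have h3 : ((1 : ℂ) ^ 2 * (‖v‖ : ℂ) ^ 2 / (4 * (1/2 : ℂ))) = ((‖v‖ ^ 2 / 2 : ℝ) : ℂ) := by
      push_cast; ring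
    rw [h1, h2, h3, ← Complex.ofReal_cpow (by positivity), ← Complex.ofReal_exp,
      ← Complex.ofReal_mul]
  rw [hLHS, hRHS] at hC
  have hReal : (∫ ω : E D, Real.exp (-(1/2) * ‖ω‖ ^ 2 + ⟪v, ω⟫))
      = (2 * Real.pi) ^ ((D : ℝ) / 2) * Real.exp (‖v‖ ^ 2 / 2) := by
    exact_mod_cast hC
  calc ∫ ω : E D, gaussN D 0 ω * Real.exp ⟪ω, v⟫
      = ∫ ω : E D, (2 * Real.pi) ^ (-(D : ℝ) / 2) *
          Real.exp (-(1/2) * ‖ω‖ ^ 2 + ⟪v, ω⟫) := by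
        congr 1; funext ω; exact hptwise ω
    _ = (2 * Real.pi) ^ (-(D : ℝ) / 2) *
          ((2 * Real.pi) ^ ((D : ℝ) / 2) * Real.exp (‖v‖ ^ 2 / 2)) := by
        rw [integral_const_mul, hReal]
    _ = Real.exp (‖v‖ ^ 2 / 2) := by
        rw [← mul_assoc, ← Real.rpow_add (by positivity),
          show (-(D : ℝ) / 2 + (D : ℝ) / 2) = 0 by ring, Real.rpow_zero, one_mul]

/-- Hyperbolic features are unbiased for the exponential kernel:
`ω ↦ N(ω; 0, I) ξ_h(x, ω)ᵀ ξ_h(y, ω)` is Lebesgue integrable and its integral is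
`exp(⟨x, y⟩)`. -/
theorem hyperbolic_features_unbiased (D : ℕ) (hD : 1 ≤ D) (x y : E D) :
    Integrable (fun ω => gaussN D 0 ω * dot2 (xiH D x ω) (xiH D y ω)) ∧
    ∫ ω, gaussN D 0 ω * dot2 (xiH D x ω) (xiH D y ω) = Real.exp ⟪x, y⟫ := by
  set v : E D := x + y with hv
  set C : ℝ := Real.exp (-‖x‖ ^ 2 / 2) * Real.exp (-‖y‖ ^ 2 / 2) / 2 with hC
  have h2 : (2 : ℝ) ^ (-(1 : ℝ) / 2) * (2 : ℝ) ^ (-(1 : ℝ) / 2) = 1 / 2 := by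
    rw [← Real.rpow_add (by norm_num : (0:ℝ) < 2),
      show (-(1:ℝ)/2 + -(1:ℝ)/2) = (-1 : ℝ) by ring, Real.rpow_neg_one]
    norm_num
  have hpt : ∀ ω : E D, gaussN D 0 ω * dot2 (xiH D x ω) (xiH D y ω) =
      C * (gaussN D 0 ω * Real.exp ⟪ω, v⟫) + C * (gaussN D 0 ω * Real.exp ⟪ω, -v⟫) := by
    intro ω
    have hiv : ⟪ω, v⟫ = ⟪ω, x⟫ + ⟪ω, y⟫ := inner_add_right ω x y
    have hivn : ⟪ω, -v⟫ = -(⟪ω, x⟫ + ⟪ω, y⟫) := by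
      rw [inner_neg_right, hiv]
    have e1 : Real.exp ⟪ω, v⟫ = Real.exp ⟪ω, x⟫ * Real.exp ⟪ω, y⟫ := by
      rw [hiv, Real.exp_add]
    have e2 : Real.exp ⟪ω, -v⟫ = Real.exp (-⟪ω, x⟫) * Real.exp (-⟪ω, y⟫) := by
      rw [hivn, neg_add, Real.exp_add]
    simp only [dot2, xiH, Prod.smul_fst, Prod.smul_snd, smul_eq_mul]
    rw [e1, e2, hC]
    linear_combination (gaussN D 0 ω * Real.exp (-‖x‖ ^ 2 / 2) * Real.exp (-‖y‖ ^ 2 / 2) *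
      (Real.exp ⟪ω, x⟫ * Real.exp ⟪ω, y⟫ + Real.exp (-⟪ω, x⟫) * Real.exp (-⟪ω, y⟫))) * h2
  have k1 := gauss_mgf D v
  have k2 := gauss_mgf D (-v)
  have hI : Integrable (fun ω => gaussN D 0 ω * dot2 (xiH D x ω) (xiH D y ω)) := by
    refine ((k1.1.const_mul C).add (k2.1.const_mul C)).congr
      (Filter.Eventually.of_forall fun ω => (hpt ω).symm)
  refine ⟨hI, ?_⟩
  calc ∫ ω, gaussN D 0 ω * dot2 (xiH D x ω) (xiH D y ω)
      = ∫ ω, (C * (gaussN D 0 ω * Real.exp ⟪ω, v⟫) +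
          C * (gaussN D 0 ω * Real.exp ⟪ω, -v⟫)) := by
        congr 1; funext ω; exact hpt ω
    _ = C * (∫ ω, gaussN D 0 ω * Real.exp ⟪ω, v⟫) +
        C * (∫ ω, gaussN D 0 ω * Real.exp ⟪ω, -v⟫) := by
        rw [integral_add (k1.1.const_mul C) (k2.1.const_mul C),
          integral_const_mul, integral_const_mul]
    _ = Real.exp ⟪x, y⟫ := by
        rw [k1.2, k2.2, norm_neg, hC]
        have hnv : ‖v‖ ^ 2 = ‖x‖ ^ 2 + 2 * ⟪x, y⟫ + ‖y‖ ^ 2 := by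
          rw [hv]; exact norm_add_sq_real x y
        have hfin : Real.exp (-‖x‖ ^ 2 / 2) * Real.exp (-‖y‖ ^ 2 / 2) *
            Real.exp (‖v‖ ^ 2 / 2) = Real.exp ⟪x, y⟫ := by
          rw [← Real.exp_add, ← Real.exp_add, hnv]
          congr 1
          ring
        linear_combination hfin
end
end

section
/- (Closed form of the variance-minimizing MIS weighting functions.) Fix C ≥ 1, positive reals Q_1, …, Q_C, a positive real P (the target density value p(ω)), a positive real s (the squared norm ‖f(ω) − μ‖²), and arbitrary reals t_1, …, t_C. Define the Lagrange multiplier λ := 2P²s/(Σ_{c'=1}^C Q_{c'}) − 2(Σ_{c=1}^C Q_c t_c)/(Σ_{c'=1}^C Q_{c'}) and set α_c := Q_c λ/(2P²s) + Q_c t_c/(P²s). Then: (i) each α_c satisfies the stationarity equation 2 α_c (P²/Q_c) s − 2 t_c − λ = 0; (ii) Σ_{c=1}^C α_c = 1; and (iii) writing r_c := t_c/(P²s), α_c = Q_c/Σ_{c'=1}^C Q_{c'} + Q_c ( r_c − Σ_{c''=1}^C (Q_{c''}/Σ_{c'=1}^C Q_{c'}) r_{c''} ). -/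
open MeasureTheory Real
open scoped RealInnerProductSpace

noncomputable section

/-- Closed form of the variance-minimizing MIS weighting functions: with positive
proposal values `Q_c`, target density value `P > 0`, squared distance `s > 0`, and
scalars `t_c`, the weights
`α_c = Q_c λ/(2P²s) + Q_c t_c/(P²s)` (with the stated Lagrange multiplier `λ`)
(i) satisfy the stationarity equations, (ii) sum to 1, and (iii) admit the
balance-heuristic-plus-correction form with `r_c = t_c/(P²s)`. -/
theorem optimal_mis_weights_closed_form (C : ℕ) (hC : 1 ≤ C)
    (Q : Fin C → ℝ) (hQ : ∀ c, 0 < Q c)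
    (P s : ℝ) (hP : 0 < P) (hs : 0 < s) (t : Fin C → ℝ) :
    let lam : ℝ := 2 * P ^ 2 * s / (∑ c', Q c') -
      2 * (∑ c, Q c * t c) / (∑ c', Q c')
    let α : Fin C → ℝ := fun c => Q c * lam / (2 * P ^ 2 * s) + Q c * t c / (P ^ 2 * s)
    let r : Fin C → ℝ := fun c => t c / (P ^ 2 * s)
    (∀ c, 2 * α c * (P ^ 2 / Q c) * s - 2 * t c - lam = 0) ∧
    (∑ c, α c = 1) ∧
    (∀ c, α c = Q c / (∑ c', Q c') +
      Q c * (r c - ∑ c'', (Q c'' / ∑ c', Q c') * r c'')) := by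
  intro lam α r
  have hS : (0:ℝ) < ∑ c', Q c' := by
    apply Finset.sum_pos (fun c _ => hQ c)
    have : Nonempty (Fin C) := Fin.pos_iff_nonempty.mp (Nat.lt_of_lt_of_le Nat.zero_lt_one hC)
    exact Finset.univ_nonempty
  have hSne : (∑ c', Q c') ≠ 0 := ne_of_gt hS
  have hPne : P ≠ 0 := ne_of_gt hP
  have hsne : s ≠ 0 := ne_of_gt hs
  have hsum : ∑ c'', (Q c'' / ∑ c', Q c') * r c''
      = (∑ c, Q c * t c) / ((∑ c', Q c') * (P ^ 2 * s)) := by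
    rw [show (∑ c'', (Q c'' / ∑ c', Q c') * r c'')
        = ∑ c'', Q c'' * t c'' / ((∑ c', Q c') * (P ^ 2 * s)) from
      Finset.sum_congr rfl (fun c _ => by simp only [r]; field_simp; try ring),
      ← Finset.sum_div]
  refine ⟨fun c => ?_, ?_, fun c => ?_⟩
  · have hQc := (hQ c).ne'
    simp only [α, lam]
    field_simp
    ring
  · simp only [α]
    rw [Finset.sum_add_distrib, ← Finset.sum_div, ← Finset.sum_div, ← Finset.sum_mul]
    simp only [lam]
    field_simp
    ring
  · simp only [α, lam, hsum, r]
    field_simp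
    ring
end
end
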